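/- Under the gated observation model, the expected information gain about y satisfies I(y; z) = P(S=1) · (H(y) - H(y | z, S=1)) whenever y ⊥ S, y ⊥ z given S=0, and z determines S. In particular if additionally H(y | z, S=1) = 0 (ideal observer), then I(y; z) = H(y) · P(S=1). -/

import Mathlib

open Real Classical

noncomputable section

variable {Ω : Type*} [Fintype Ω]

/-- Probability of an event under a pmf on a finite sample space. -/
def prob (μ : Ω → ℝ) (E : Ω → Prop) : ℝ :=
  ∑ ω, if E ω then μ ω else 0

/-- `μ` is a probability mass function on the finite sample space. -/
def IsPMF (μ : Ω → ℝ) : Prop :=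
  (∀ ω, 0 ≤ μ ω) ∧ ∑ ω, μ ω = 1

/-- Shannon entropy `H(X)` of a random variable `X`. -/
def ent {A : Type*} [Fintype A] (μ : Ω → ℝ) (X : Ω → A) : ℝ :=
  ∑ a, Real.negMulLog (prob μ fun ω => X ω = a)

/-- Conditional entropy `H(X | Y)`. -/
def condEnt {A B : Type*} [Fintype A] [Fintype B] (μ : Ω → ℝ) (X : Ω → A) (Y : Ω → B) : ℝ :=
  ent μ (fun ω => (X ω, Y ω)) - ent μ Y

/-- Mutual information `I(X ; Y) = H(X) - H(X | Y)`. -/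
def mutInfo {A B : Type*} [Fintype A] [Fintype B] (μ : Ω → ℝ) (X : Ω → A) (Y : Ω → B) : ℝ :=
  ent μ X - condEnt μ X Y

/-- Conditional mutual information `I(X ; Y | Z) = H(X | Z) - H(X | Y, Z)`. -/
def condMutInfo {A B C : Type*} [Fintype A] [Fintype B] [Fintype C]
    (μ : Ω → ℝ) (X : Ω → A) (Y : Ω → B) (Z : Ω → C) : ℝ :=
  condEnt μ X Z - condEnt μ X (fun ω => (Y ω, Z ω))

/-- The conditional measure given an event `E`. -/
def condMeas (μ : Ω → ℝ) (E : Ω → Prop) : Ω → ℝ :=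
  fun ω => if E ω then μ ω / prob μ E else 0

/-!
Since `z` determines the gate `S`, both `H(y, z)` and `H(z)` split along `S` into the `P(S=1)`- and
`P(S=0)`-weighted entropies under the two conditional measures plus the same binary entropy of `S`,
so `H(y | z)` is the weighted average of `H(y | z, S=1)` and `H(y | z, S=0)`. On the invisible
branch `z` carries no information about `y`, and `y ⟂ S` makes the law of `y` given `S=0` its
unconditional law, so `H(y | z, S=0) = H(y)`, and `I(y ; z) = H(y) - H(y | z)` collapses to
`P(S=1) · (H(y) - H(y | z, S=1))`.
-/

open Finset

section Prob

variable {C D : Type*}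

lemma prob_nonneg {μ : Ω → ℝ} (hμ : ∀ ω, 0 ≤ μ ω) (E : Ω → Prop) : 0 ≤ prob μ E :=
  sum_nonneg fun ω _ => by split_ifs <;> simp [hμ ω]

lemma prob_mono {μ : Ω → ℝ} (hμ : ∀ ω, 0 ≤ μ ω) {E F : Ω → Prop} (h : ∀ ω, F ω → E ω) :
    prob μ F ≤ prob μ E :=
  sum_le_sum fun ω _ => by split_ifs <;> simp_all

lemma prob_eq_zero_of_imp {μ : Ω → ℝ} (hμ : ∀ ω, 0 ≤ μ ω) {E F : Ω → Prop}
    (h : ∀ ω, F ω → E ω) (hE : prob μ E = 0) : prob μ F = 0 :=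
  le_antisymm (hE ▸ prob_mono hμ h) (prob_nonneg hμ F)

lemma prob_congr (μ : Ω → ℝ) {E F : Ω → Prop} (h : ∀ ω, E ω ↔ F ω) : prob μ E = prob μ F := by
  simp only [prob, h]

lemma prob_condMeas (μ : Ω → ℝ) (E F : Ω → Prop) :
    prob (condMeas μ E) F = prob μ (fun ω => F ω ∧ E ω) / prob μ E := by
  simp only [prob, condMeas, sum_div]
  refine sum_congr rfl fun ω _ => ?_
  by_cases hF : F ω <;> by_cases hE : E ω <;> simp [hF, hE]

lemma sum_prob_eq_sum [Fintype C] (μ : Ω → ℝ) (X : Ω → C) :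
    ∑ c, prob μ (fun ω => X ω = c) = ∑ ω, μ ω := by
  simp only [prob]
  rw [sum_comm]
  simp

lemma sum_prob_condMeas [Fintype C] (μ : Ω → ℝ) {E : Ω → Prop} (hE : prob μ E ≠ 0) (X : Ω → C) :
    ∑ c, prob (condMeas μ E) (fun ω => X ω = c) = 1 := by
  rw [sum_prob_eq_sum, ← div_self hE]
  simp only [condMeas, prob, sum_div]
  exact sum_congr rfl fun ω _ => by split_ifs <;> simp

lemma prob_eq_prob_and_true_add (μ : Ω → ℝ) (S : Ω → Bool) (E : Ω → Prop) :
    prob μ E = prob μ (fun ω => E ω ∧ S ω = true) + prob μ (fun ω => E ω ∧ S ω = false) := by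
  simp only [prob, ← sum_add_distrib]
  refine sum_congr rfl fun ω _ => ?_
  rcases Bool.eq_false_or_eq_true (S ω) with hS | hS <;> simp [hS]

lemma prob_true_add_prob_false {μ : Ω → ℝ} (hμ : IsPMF μ) (S : Ω → Bool) :
    prob μ (fun ω => S ω = true) + prob μ (fun ω => S ω = false) = 1 := by
  rw [← hμ.2, ← sum_prob_eq_sum μ S, Fintype.sum_bool, add_comm]

def AEDeterminedBy (μ : Ω → ℝ) (S : Ω → Bool) (X : Ω → C) : Prop :=
  ∀ c, prob μ (fun ω => X ω = c ∧ S ω = true) = 0 ∨ prob μ (fun ω => X ω = c ∧ S ω = false) = 0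

lemma AEDeterminedBy.of_comp {μ : Ω → ℝ} (hμ : ∀ ω, 0 ≤ μ ω) {S : Ω → Bool} {X : Ω → C}
    (f : C → D) (h : AEDeterminedBy μ S (fun ω => f (X ω))) : AEDeterminedBy μ S X := fun c =>
  (h (f c)).imp (prob_eq_zero_of_imp hμ fun _ hω => ⟨congrArg f hω.1, hω.2⟩)
    (prob_eq_zero_of_imp hμ fun _ hω => ⟨congrArg f hω.1, hω.2⟩)

end Prob

section Entropy

variable {A B C : Type*} [Fintype A] [Fintype B] [Fintype C]

lemma negMulLog_add_lt_add {u v : ℝ} (hu : 0 < u) (hv : 0 < v) :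
    negMulLog (u + v) < negMulLog u + negMulLog v := by
  have hlu : log u < log (u + v) := log_lt_log hu (by linarith)
  have hlv : log v < log (u + v) := log_lt_log hv (by linarith)
  simp only [negMulLog]
  nlinarith [mul_lt_mul_of_pos_left hlu hu, mul_lt_mul_of_pos_left hlv hv]

lemma negMulLog_add_le_add {u v : ℝ} (hu : 0 ≤ u) (hv : 0 ≤ v) :
    negMulLog (u + v) ≤ negMulLog u + negMulLog v := by
  rcases hu.eq_or_lt with rfl | hu
  · simp
  rcases hv.eq_or_lt with rfl | hv
  · simp
  exact (negMulLog_add_lt_add hu hv).le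

lemma sum_negMulLog_prob_and (μ : Ω → ℝ) {E : Ω → Prop} (hE : prob μ E ≠ 0) (X : Ω → C) :
    ∑ c, negMulLog (prob μ (fun ω => X ω = c ∧ E ω))
      = prob μ E * ent (condMeas μ E) X + negMulLog (prob μ E) := by
  have hfactor : ∀ c, prob μ (fun ω => X ω = c ∧ E ω)
      = prob μ E * prob (condMeas μ E) (fun ω => X ω = c) := fun c => by
    rw [prob_condMeas, mul_div_cancel₀ _ hE]
  simp only [hfactor, negMulLog_mul, sum_add_distrib, ← sum_mul, ← mul_sum,
    sum_prob_condMeas μ hE, ent]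
  ring

lemma condEnt_bool_eq_sum (μ : Ω → ℝ) (S : Ω → Bool) (X : Ω → C) :
    condEnt μ S X = ∑ c, (negMulLog (prob μ (fun ω => X ω = c ∧ S ω = true))
      + negMulLog (prob μ (fun ω => X ω = c ∧ S ω = false))
      - negMulLog (prob μ (fun ω => X ω = c))) := by
  have hpair : ∀ s c, prob μ (fun ω => (S ω, X ω) = (s, c))
      = prob μ (fun ω => X ω = c ∧ S ω = s) := fun s c =>
    prob_congr μ fun ω => by rw [Prod.ext_iff, and_comm]
  simp only [condEnt, ent, Fintype.sum_prod_type, Fintype.sum_bool, hpair, sum_sub_distrib,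
    sum_add_distrib]

lemma aeDeterminedBy_of_condEnt_eq_zero {μ : Ω → ℝ} (hμ : ∀ ω, 0 ≤ μ ω) {S : Ω → Bool}
    {X : Ω → C} (h : condEnt μ S X = 0) : AEDeterminedBy μ S X := by
  rw [condEnt_bool_eq_sum] at h
  have hterm_nonneg : ∀ c ∈ univ, 0 ≤ negMulLog (prob μ (fun ω => X ω = c ∧ S ω = true))
      + negMulLog (prob μ (fun ω => X ω = c ∧ S ω = false))
      - negMulLog (prob μ (fun ω => X ω = c)) := fun c _ => by
    rw [sub_nonneg, prob_eq_prob_and_true_add μ S (fun ω => X ω = c)]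
    exact negMulLog_add_le_add (prob_nonneg hμ _) (prob_nonneg hμ _)
  intro c
  have hterm_zero := (sum_eq_zero_iff_of_nonneg hterm_nonneg).1 h c (mem_univ c)
  by_contra! ⟨hu, hv⟩
  have hgap := negMulLog_add_lt_add ((prob_nonneg hμ _).lt_of_ne' hu)
    ((prob_nonneg hμ _).lt_of_ne' hv)
  rw [← prob_eq_prob_and_true_add] at hgap
  linarith

lemma ent_eq_of_aeDeterminedBy (μ : Ω → ℝ) {S : Ω → Bool}
    (hp : prob μ (fun ω => S ω = true) ≠ 0) (hq : prob μ (fun ω => S ω = false) ≠ 0)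
    {X : Ω → C} (h : AEDeterminedBy μ S X) :
    ent μ X = prob μ (fun ω => S ω = true) * ent (condMeas μ (fun ω => S ω = true)) X
      + prob μ (fun ω => S ω = false) * ent (condMeas μ (fun ω => S ω = false)) X
      + (negMulLog (prob μ (fun ω => S ω = true))
        + negMulLog (prob μ (fun ω => S ω = false))) := by
  have hsplit : ∀ c, negMulLog (prob μ (fun ω => X ω = c))
      = negMulLog (prob μ (fun ω => X ω = c ∧ S ω = true))
        + negMulLog (prob μ (fun ω => X ω = c ∧ S ω = false)) := fun c => by
    rw [prob_eq_prob_and_true_add μ S (fun ω => X ω = c)]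
    rcases h c with h0 | h0 <;> simp [h0]
  calc ent μ X = ∑ c, negMulLog (prob μ (fun ω => X ω = c ∧ S ω = true))
        + ∑ c, negMulLog (prob μ (fun ω => X ω = c ∧ S ω = false)) := by
        simp only [ent, hsplit, sum_add_distrib]
    _ = _ := by
        rw [sum_negMulLog_prob_and μ hp, sum_negMulLog_prob_and μ hq]
        ring

lemma condEnt_eq_of_aeDeterminedBy {μ : Ω → ℝ} (hμ : ∀ ω, 0 ≤ μ ω) {S : Ω → Bool}
    (hp : prob μ (fun ω => S ω = true) ≠ 0) (hq : prob μ (fun ω => S ω = false) ≠ 0)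
    (X : Ω → A) {Y : Ω → B} (h : AEDeterminedBy μ S Y) :
    condEnt μ X Y
      = prob μ (fun ω => S ω = true) * condEnt (condMeas μ (fun ω => S ω = true)) X Y
        + prob μ (fun ω => S ω = false) * condEnt (condMeas μ (fun ω => S ω = false)) X Y := by
  have hXY : AEDeterminedBy μ S (fun ω => (X ω, Y ω)) := h.of_comp hμ Prod.snd
  simp only [condEnt]
  rw [ent_eq_of_aeDeterminedBy μ hp hq hXY, ent_eq_of_aeDeterminedBy μ hp hq h]
  ring

lemma ent_pair_of_indep (ν : Ω → ℝ) {X : Ω → A} {Y : Ω → B}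
    (hX : ∑ a, prob ν (fun ω => X ω = a) = 1) (hY : ∑ b, prob ν (fun ω => Y ω = b) = 1)
    (hind : ∀ a b, prob ν (fun ω => X ω = a ∧ Y ω = b)
      = prob ν (fun ω => X ω = a) * prob ν (fun ω => Y ω = b)) :
    ent ν (fun ω => (X ω, Y ω)) = ent ν X + ent ν Y := by
  have hpair : ∀ a b, prob ν (fun ω => (X ω, Y ω) = (a, b))
      = prob ν (fun ω => X ω = a) * prob ν (fun ω => Y ω = b) := fun a b => by
    rw [← hind]
    exact prob_congr ν fun ω => Prod.ext_iff
  simp only [ent, Fintype.sum_prod_type, hpair, negMulLog_mul, sum_add_distrib, ← sum_mul,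
    ← mul_sum, hX, hY, one_mul]

lemma condEnt_eq_ent_of_indep (ν : Ω → ℝ) {X : Ω → A} {Y : Ω → B}
    (hX : ∑ a, prob ν (fun ω => X ω = a) = 1) (hY : ∑ b, prob ν (fun ω => Y ω = b) = 1)
    (hind : ∀ a b, prob ν (fun ω => X ω = a ∧ Y ω = b)
      = prob ν (fun ω => X ω = a) * prob ν (fun ω => Y ω = b)) :
    condEnt ν X Y = ent ν X := by
  rw [condEnt, ent_pair_of_indep ν hX hY hind]
  ring

lemma ent_condMeas_of_indep (μ : Ω → ℝ) {E : Ω → Prop} (hE : prob μ E ≠ 0) {X : Ω → A}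
    (hind : ∀ a, prob μ (fun ω => X ω = a ∧ E ω) = prob μ (fun ω => X ω = a) * prob μ E) :
    ent (condMeas μ E) X = ent μ X := by
  simp only [ent, prob_condMeas, hind, mul_div_cancel_right₀ _ hE]

end Entropy

/-- Gated observation model: if `y ⟂ S`, `y ⟂ z` given `S = 0`, and `z` determines `S`
(`H(S|z) = 0`), then `I(y ; z) = P(S=1) · (H(y) - H(y | z, S=1))`; with an ideal observer
(`H(y | z, S=1) = 0`) this gives `I(y ; z) = H(y) · P(S=1)`. -/
theorem gated_information_gain {A B : Type*} [Fintype A] [Fintype B]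
    (μ : Ω → ℝ) (hμ : IsPMF μ) (y : Ω → A) (z : Ω → B) (S : Ω → Bool)
    (h1 : 0 < prob μ (fun ω => S ω = true))
    (h1' : prob μ (fun ω => S ω = true) < 1)
    (hyS : ∀ (a : A) (s : Bool),
      prob μ (fun ω => y ω = a ∧ S ω = s)
        = prob μ (fun ω => y ω = a) * prob μ (fun ω => S ω = s))
    (hyz0 : ∀ (a : A) (b : B),
      prob (condMeas μ (fun ω => S ω = false)) (fun ω => y ω = a ∧ z ω = b)
        = prob (condMeas μ (fun ω => S ω = false)) (fun ω => y ω = a)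
          * prob (condMeas μ (fun ω => S ω = false)) (fun ω => z ω = b))
    (hdet : condEnt μ S z = 0) :
    mutInfo μ y z
      = prob μ (fun ω => S ω = true)
        * (ent μ y - condEnt (condMeas μ (fun ω => S ω = true)) y z) ∧
      (condEnt (condMeas μ (fun ω => S ω = true)) y z = 0 →
        mutInfo μ y z = ent μ y * prob μ (fun ω => S ω = true)) := by
  have hpq := prob_true_add_prob_false hμ S
  have hq : prob μ (fun ω => S ω = false) ≠ 0 := by linarith
  have hsplit := condEnt_eq_of_aeDeterminedBy hμ.1 h1.ne' hq y
    (aeDeterminedBy_of_condEnt_eq_zero hμ.1 hdet)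
  have hinvisible : condEnt (condMeas μ (fun ω => S ω = false)) y z = ent μ y := by
    rw [condEnt_eq_ent_of_indep _ (sum_prob_condMeas μ hq y) (sum_prob_condMeas μ hq z) hyz0,
      ent_condMeas_of_indep μ hq (fun a => hyS a false)]
  have hgain : mutInfo μ y z = prob μ (fun ω => S ω = true)
      * (ent μ y - condEnt (condMeas μ (fun ω => S ω = true)) y z) := by
    rw [mutInfo, hsplit, hinvisible]
    linear_combination (-ent μ y) * hpq
  exact ⟨hgain, fun hideal => by rw [hgain, hideal]; ring⟩
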